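/- Let x ∈ {0,1}^∞ be an infinite binary sequence. If liminf_{n→∞} Λ(x_1...x_n)/n³ > 0 then liminf_{n→∞} Σ(x_1...x_n)/n³ > 0, and conversely if liminf Σ(x_1...x_n)/n³ > 0 then liminf Λ(x_1...x_n)/n³ > 0. -/

import Mathlib

open Filter

/-- Number of occurrences of `ξ` as a factor of `w` (occurrence at position `i`
means `ξ = w_{i+1}...w_{i+|ξ|}`). -/
def occ (w ξ : List Bool) : ℕ :=
  ((List.range w.length).filter (fun i => ξ.isPrefixOf (w.drop i))).length

/-- `ℓ`-fold concatenation `η^ℓ` of the word `η`. -/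
def wpow (η : List Bool) (ℓ : ℕ) : List Bool := (List.replicate ℓ η).flatten

/-- The Kamae–Xue complexity `Σ(w) = Σ_{ξ ∈ {0,1}^+} |w|_ξ²`.  Since only
factors of `w` contribute nonzero terms, the sum is taken over the (finite) set
of nonempty sublists of `w`, which contains all factors of `w`. -/
def kxSum (w : List Bool) : ℕ :=
  ∑ ξ ∈ w.sublists.toFinset.filter (fun ξ => ξ ≠ []), (occ w ξ) ^ 2

/-- `Λ(w) = max{|η|²(ℓ+1)³ : η nonempty, ℓ ≥ 1, η^ℓ a factor of w}`. -/
noncomputable def Lam (w : List Bool) : ℕ :=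
  sSup {m | ∃ η ℓ, η ≠ ([] : List Bool) ∧ 1 ≤ ℓ ∧ wpow η ℓ <:+: w ∧
    m = η.length ^ 2 * (ℓ + 1) ^ 3}

/-- A nonempty word is prime (primitive) if it is not a proper power. -/
def IsPrimeWord (η : List Bool) : Prop :=
  η ≠ [] ∧ ∀ ζ ℓ, 2 ≤ ℓ → η ≠ wpow ζ ℓ

/-- `|v|_{ξ,m}`: occurrences of `ξ` in `v` ending in the last `m` positions. -/
def occEnd (v ξ : List Bool) (m : ℕ) : ℕ :=
  ((List.range v.length).filter
    (fun i => ξ.isPrefixOf (v.drop i) && decide (v.length < i + ξ.length + m))).length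

/-- The prefix `x_1 x_2 ⋯ x_n` of the infinite sequence `x`. -/
def pref (x : ℕ → Bool) (n : ℕ) : List Bool := (List.range n).map x

/-!
If `Λ(w) ≥ c n³`, a factor `η^ℓ` with `|η|²(ℓ+1)³ ≥ c n³` forces `ℓ ≳ c n`, and the words
`η, η², …, η^{ℓ/2}` each occur about `ℓ/2` times, so `Σ(w) ≳ ℓ³ ≳ c³ n³`.
Conversely, if `Σ(w) ≥ c n³`, the factors of some single length `m ≥ c n / 2` contribute at least
`c n² / 2`, so some factor `ξ` of that length occurs at least `c n / 2` times. By pigeonhole two of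
these occurrences lie at distance `e ≤ 4 / c ≤ |ξ|`, so `ξ` has period `e` and the occurrence
extends to a power of a word of length `e` with exponent about `|ξ| / e`, whence
`Λ(w) ≥ |ξ|³ / e ≳ c⁴ n³`.
-/

open Finset

theorem pref_length (x : ℕ → Bool) (n : ℕ) : (pref x n).length = n := by simp [pref]

theorem wpow_succ (η : List Bool) (ℓ : ℕ) : wpow η (ℓ + 1) = η ++ wpow η ℓ := by
  simp [wpow, List.replicate_succ]

theorem wpow_length (η : List Bool) (ℓ : ℕ) : (wpow η ℓ).length = ℓ * η.length := by
  simp [wpow]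

theorem wpow_add (η : List Bool) (s t : ℕ) : wpow η (s + t) = wpow η s ++ wpow η t := by
  simp only [wpow, List.replicate_add, List.flatten_append]

theorem wpow_prefix_wpow (η : List Bool) {s t : ℕ} (h : s ≤ t) : wpow η s <+: wpow η t := by
  obtain ⟨d, rfl⟩ := Nat.exists_eq_add_of_le h
  rw [wpow_add]
  exact List.prefix_append _ _

theorem drop_wpow (η : List Bool) {j ℓ : ℕ} (h : j ≤ ℓ) :
    (wpow η ℓ).drop (j * η.length) = wpow η (ℓ - j) := by
  conv_lhs => rw [← Nat.add_sub_cancel' h, wpow_add]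
  exact List.drop_left' (wpow_length η j)

theorem wpow_injective {η : List Bool} (hη : η ≠ []) : Function.Injective (wpow η) := by
  intro s t hst
  have := congrArg List.length hst
  rw [wpow_length, wpow_length] at this
  exact Nat.eq_of_mul_eq_mul_right (List.length_pos_iff.2 hη) this

theorem occ_eq_card (w ξ : List Bool) :
    occ w ξ = #{i ∈ range w.length | ξ <+: w.drop i} := by
  rw [occ, ← List.toFinset_card_of_nodup (List.nodup_range.filter _), List.toFinset_filter,
    List.toFinset_range]
  simp only [List.isPrefixOf_iff_prefix]

theorem occ_le_length (w ξ : List Bool) : occ w ξ ≤ w.length := by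
  rw [occ_eq_card]
  exact (card_filter_le _ _).trans (card_range _).le

theorem occ_le_occ_of_infix {u w : List Bool} (h : u <:+: w) (ξ : List Bool) :
    occ u ξ ≤ occ w ξ := by
  obtain ⟨a, b, rfl⟩ := h
  rw [occ_eq_card, occ_eq_card]
  refine card_le_card_of_injOn (a.length + ·) (fun i hi => ?_) (fun i _ j _ h => by simpa using h)
  simp only [coe_filter, mem_range, Set.mem_ofPred_eq] at hi ⊢
  refine ⟨by simp; omega, ?_⟩
  rw [List.append_assoc, List.drop_length_add_append, List.drop_append_of_le_length hi.1.le]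
  exact hi.2.trans (List.prefix_append _ _)

theorem le_occ_wpow {η : List Bool} (hη : η ≠ []) {t ℓ : ℕ} (ht : 1 ≤ t) (htℓ : t ≤ ℓ) :
    ℓ + 1 - t ≤ occ (wpow η ℓ) (wpow η t) := by
  have hlen : 0 < η.length := List.length_pos_iff.2 hη
  rw [occ_eq_card]
  refine (card_range _).symm.le.trans (card_le_card_of_injOn (· * η.length) (fun j hj => ?_)
    (fun i _ j _ h => Nat.eq_of_mul_eq_mul_right hlen h))
  simp only [coe_range, Set.mem_Iio, coe_filter, mem_range, Set.mem_ofPred_eq, wpow_length] at hj ⊢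
  refine ⟨Nat.mul_lt_mul_of_pos_right (by omega) hlen, ?_⟩
  rw [drop_wpow η (by omega)]
  exact wpow_prefix_wpow η (by omega)

-- Distinct words of one length cannot both be prefixes at the same position.
theorem sum_occ_le_length {G : Finset (List Bool)} {m : ℕ} (hG : ∀ ξ ∈ G, ξ.length = m)
    (w : List Bool) : ∑ ξ ∈ G, occ w ξ ≤ w.length := by
  calc ∑ ξ ∈ G, occ w ξ = ∑ i ∈ range w.length, #{ξ ∈ G | ξ <+: w.drop i} := by
        simp only [occ_eq_card, card_filter]
        exact sum_comm
    _ ≤ ∑ _i ∈ range w.length, 1 := sum_le_sum fun i _ => card_le_one.2 fun ξ hξ ζ hζ => by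
        rw [mem_filter] at hξ hζ
        rw [List.prefix_iff_eq_take.1 hξ.2, List.prefix_iff_eq_take.1 hζ.2, hG ξ hξ.1, hG ζ hζ.1]
    _ = w.length := by simp

def kxSupport (w : List Bool) : Finset (List Bool) :=
  w.sublists.toFinset.filter (fun ξ => ξ ≠ [])

theorem mem_kxSupport {w ξ : List Bool} : ξ ∈ kxSupport w ↔ ξ.Sublist w ∧ ξ ≠ [] := by
  simp [kxSupport, List.mem_sublists]

def kxSumOfLength (w : List Bool) (m : ℕ) : ℕ :=
  ∑ ξ ∈ kxSupport w with ξ.length = m, occ w ξ ^ 2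

theorem kxSum_eq_sum_kxSumOfLength (w : List Bool) :
    kxSum w = ∑ m ∈ Icc 1 w.length, kxSumOfLength w m := by
  refine (sum_fiberwise_of_maps_to (fun ξ hξ => ?_) _).symm
  obtain ⟨hsub, hne⟩ := mem_kxSupport.1 hξ
  exact mem_Icc.2 ⟨List.length_pos_iff.2 hne, hsub.length_le⟩

theorem kxSumOfLength_le_mul_sum_occ (w : List Bool) (m : ℕ) (B : ℕ)
    (hB : ∀ ξ ∈ kxSupport w, ξ.length = m → occ w ξ ≤ B) :
    kxSumOfLength w m ≤ B * ∑ ξ ∈ kxSupport w with ξ.length = m, occ w ξ := by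
  rw [kxSumOfLength, mul_sum]
  refine sum_le_sum fun ξ hξ => ?_
  rw [mem_filter] at hξ
  rw [sq]
  exact Nat.mul_le_mul_right _ (hB ξ hξ.1 hξ.2)

theorem kxSumOfLength_le (w : List Bool) (m : ℕ) : kxSumOfLength w m ≤ w.length ^ 2 :=
  (kxSumOfLength_le_mul_sum_occ w m _ fun ξ _ _ => occ_le_length w ξ).trans <| by
    rw [sq]
    exact Nat.mul_le_mul_left _ (sum_occ_le_length (fun ξ hξ => (mem_filter.1 hξ).2) w)

theorem exists_length_eq_kxSumOfLength_le (w : List Bool) (m : ℕ) :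
    ∃ ξ : List Bool, ξ.length = m ∧ kxSumOfLength w m ≤ occ w ξ * w.length := by
  rcases (kxSupport w |>.filter (·.length = m)).eq_empty_or_nonempty with h | h
  · refine ⟨List.replicate m false, List.length_replicate, ?_⟩
    simp [kxSumOfLength, h]
  obtain ⟨ξ, hξ, hmax⟩ := exists_max_image _ (occ w) h
  refine ⟨ξ, (mem_filter.1 hξ).2, (kxSumOfLength_le_mul_sum_occ w m _ fun ζ hζ hlen => ?_).trans
    (Nat.mul_le_mul_left _ (sum_occ_le_length (fun ξ hξ => (mem_filter.1 hξ).2) w))⟩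
  exact hmax ζ (mem_filter.2 ⟨hζ, hlen⟩)

theorem kxSum_le (w : List Bool) : kxSum w ≤ w.length ^ 3 := by
  rw [kxSum_eq_sum_kxSumOfLength]
  calc ∑ m ∈ Icc 1 w.length, kxSumOfLength w m ≤ ∑ _m ∈ Icc 1 w.length, w.length ^ 2 :=
        sum_le_sum fun m _ => kxSumOfLength_le w m
    _ = w.length ^ 3 := by simp; ring

def LamSet (w : List Bool) : Set ℕ :=
  {m | ∃ η ℓ, η ≠ ([] : List Bool) ∧ 1 ≤ ℓ ∧ wpow η ℓ <:+: w ∧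
    m = η.length ^ 2 * (ℓ + 1) ^ 3}

theorem Lam_eq_sSup (w : List Bool) : Lam w = sSup (LamSet w) := rfl

theorem exponent_le_length {η w : List Bool} (hη : η ≠ []) {ℓ : ℕ} (h : wpow η ℓ <:+: w) :
    ℓ ≤ w.length := by
  have := h.length_le
  rw [wpow_length] at this
  exact (Nat.le_mul_of_pos_right ℓ (List.length_pos_iff.2 hη)).trans this

theorem length_sq_mul_succ_cube_le {η w : List Bool} {ℓ : ℕ} (hℓ : 1 ≤ ℓ)
    (h : wpow η ℓ <:+: w) : η.length ^ 2 * (ℓ + 1) ^ 3 ≤ 8 * w.length ^ 2 * ℓ := by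
  have hlen : ℓ * η.length ≤ w.length := by simpa [wpow_length] using h.length_le
  have hsq : (ℓ * η.length) ^ 2 ≤ w.length ^ 2 := Nat.pow_le_pow_left hlen 2
  have hcube : (ℓ + 1) ^ 3 ≤ 8 * ℓ ^ 3 := by
    calc (ℓ + 1) ^ 3 ≤ (2 * ℓ) ^ 3 := Nat.pow_le_pow_left (by omega) 3
      _ = 8 * ℓ ^ 3 := by ring
  calc η.length ^ 2 * (ℓ + 1) ^ 3 ≤ η.length ^ 2 * (8 * ℓ ^ 3) := Nat.mul_le_mul_left _ hcube
    _ = 8 * (ℓ * η.length) ^ 2 * ℓ := by ring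
    _ ≤ 8 * w.length ^ 2 * ℓ := by gcongr

theorem le_eight_mul_length_cube_of_mem_LamSet {w : List Bool} {m : ℕ} (hm : m ∈ LamSet w) :
    m ≤ 8 * w.length ^ 3 := by
  obtain ⟨η, ℓ, hη, hℓ, h, rfl⟩ := hm
  calc η.length ^ 2 * (ℓ + 1) ^ 3 ≤ 8 * w.length ^ 2 * ℓ := length_sq_mul_succ_cube_le hℓ h
    _ ≤ 8 * w.length ^ 2 * w.length := Nat.mul_le_mul_left _ (exponent_le_length hη h)
    _ = 8 * w.length ^ 3 := by ring

theorem Lam_le (w : List Bool) : Lam w ≤ 8 * w.length ^ 3 :=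
  csSup_le' fun _ => le_eight_mul_length_cube_of_mem_LamSet

theorem le_Lam {w : List Bool} {m : ℕ} (hm : m ∈ LamSet w) : m ≤ Lam w :=
  le_csSup ⟨_, fun _ => le_eight_mul_length_cube_of_mem_LamSet⟩ hm

theorem Lam_mem_LamSet {w : List Bool} (h : 0 < Lam w) : Lam w ∈ LamSet w := by
  refine Nat.sSup_mem ?_ ⟨_, fun _ => le_eight_mul_length_cube_of_mem_LamSet⟩
  by_contra hempty
  rw [Set.not_nonempty_iff_eq_empty] at hempty
  simp [Lam_eq_sSup, hempty] at h

-- The words `η^t` with `t ≤ (ℓ + 1) / 2` each occur at least `ℓ + 1 - t ≥ ℓ / 2` times in `η^ℓ`.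
theorem exponent_cube_le_kxSum {η w : List Bool} {ℓ : ℕ} (hη : η ≠ [])
    (h : wpow η ℓ <:+: w) : ℓ ^ 3 ≤ 8 * kxSum w := by
  set k := (ℓ + 1) / 2
  have hsupport : (Icc 1 k).image (wpow η) ⊆ kxSupport w := by
    intro ξ hξ
    obtain ⟨t, ht, rfl⟩ := mem_image.1 hξ
    rw [mem_Icc] at ht
    refine mem_kxSupport.2 ⟨((wpow_prefix_wpow η (by omega)).isInfix.trans h).sublist, ?_⟩
    rw [← List.length_pos_iff, wpow_length]
    exact Nat.mul_pos ht.1 (List.length_pos_iff.2 hη)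
  have hocc : ∀ t ∈ Icc 1 k, (ℓ + 1 - k) ^ 2 ≤ occ w (wpow η t) ^ 2 := by
    intro t ht
    rw [mem_Icc] at ht
    refine Nat.pow_le_pow_left ?_ 2
    calc ℓ + 1 - k ≤ ℓ + 1 - t := by omega
      _ ≤ occ (wpow η ℓ) (wpow η t) := le_occ_wpow hη ht.1 (by omega)
      _ ≤ occ w (wpow η t) := occ_le_occ_of_infix h _
  calc ℓ ^ 3 ≤ 8 * (k * (ℓ + 1 - k) ^ 2) := by
        have h1 : ℓ ≤ 2 * k := by omega
        have h2 : ℓ ≤ 2 * (ℓ + 1 - k) := by omega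
        calc ℓ ^ 3 = ℓ * ℓ ^ 2 := by ring
          _ ≤ (2 * k) * (2 * (ℓ + 1 - k)) ^ 2 := by gcongr
          _ = 8 * (k * (ℓ + 1 - k) ^ 2) := by ring
    _ ≤ 8 * ∑ t ∈ Icc 1 k, occ w (wpow η t) ^ 2 := by
        have := card_nsmul_le_sum _ _ _ hocc
        simpa using Nat.mul_le_mul_left 8 this
    _ = 8 * ∑ ξ ∈ (Icc 1 k).image (wpow η), occ w ξ ^ 2 := by
        rw [sum_image fun s _ t _ hst => wpow_injective hη hst]
    _ ≤ 8 * kxSum w := Nat.mul_le_mul_left 8 (sum_le_sum_of_subset hsupport)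

theorem Lam_cube_le (w : List Bool) : Lam w ^ 3 ≤ 4096 * w.length ^ 6 * kxSum w := by
  rcases Nat.eq_zero_or_pos (Lam w) with h0 | hpos
  · simp [h0]
  obtain ⟨η, ℓ, hη, hℓ, h, hLam⟩ := Lam_mem_LamSet hpos
  have hle : Lam w ≤ 8 * w.length ^ 2 * ℓ := hLam ▸ length_sq_mul_succ_cube_le hℓ h
  calc Lam w ^ 3 ≤ (8 * w.length ^ 2 * ℓ) ^ 3 := Nat.pow_le_pow_left hle 3
    _ = 512 * w.length ^ 6 * ℓ ^ 3 := by ring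
    _ ≤ 512 * w.length ^ 6 * (8 * kxSum w) := by gcongr; exact exponent_cube_le_kxSum hη h
    _ = 4096 * w.length ^ 6 * kxSum w := by ring

theorem Finset.exists_lt_lt_add_of_le_card_mul {S : Finset ℕ} {n d : ℕ} (hS : S ⊆ range n)
    (hd : 0 < d) (hn : n + d ≤ #S * d) : ∃ i ∈ S, ∃ j ∈ S, i < j ∧ j < i + d := by
  have hmaps : ∀ i ∈ S, i / d ∈ range (#S - 1) := by
    intro i hi
    have hi' := mem_range.1 (hS hi)
    rw [mem_range, Nat.div_lt_iff_lt_mul hd, Nat.sub_mul, one_mul]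
    omega
  have hcard : #(range (#S - 1)) < #S := by
    have : 0 < #S := Nat.pos_of_ne_zero fun h => by simp [h] at hn; omega
    rw [card_range]
    omega
  obtain ⟨i, hi, j, hj, hne, heq⟩ := exists_ne_map_eq_of_card_lt_of_maps_to hcard hmaps
  have close : ∀ a b, a / d = b / d → b < a + d := fun a b h => by
    have ha := Nat.div_add_mod a d
    have hb := Nat.div_add_mod b d
    have := Nat.mod_lt b hd
    rw [h] at ha
    omega
  rcases hne.lt_or_gt with h | h
  · exact ⟨i, hi, j, hj, h, close i j heq⟩
  · exact ⟨j, hj, i, hi, h, close j i heq.symm⟩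

theorem exists_close_occurrences {w ξ : List Bool} (h : 2 ≤ occ w ξ) :
    ∃ i e, 1 ≤ e ∧ e * (occ w ξ - 1) ≤ w.length ∧ ξ <+: w.drop i ∧ ξ <+: (w.drop i).drop e := by
  have hd : w.length + (w.length / (occ w ξ - 1) + 1) ≤
      occ w ξ * (w.length / (occ w ξ - 1) + 1) := by
    have := Nat.lt_mul_div_succ w.length (show 0 < occ w ξ - 1 by omega)
    have hsucc : occ w ξ = (occ w ξ - 1) + 1 := by omega
    rw [hsucc, add_mul, one_mul, Nat.add_sub_cancel]
    omega
  rw [occ_eq_card] at hd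
  obtain ⟨i, hi, j, hj, hij, hji⟩ :=
    exists_lt_lt_add_of_le_card_mul (filter_subset _ _) (Nat.succ_pos _) hd
  rw [← occ_eq_card] at hji
  refine ⟨i, j - i, by omega, ?_, (mem_filter.1 hi).2, ?_⟩
  · rw [← Nat.le_div_iff_mul_le (by omega)]
    omega
  · rw [List.drop_drop, Nat.add_sub_cancel' hij.le]
    exact (mem_filter.1 hj).2

theorem prefix_wpow_of_prefix_append {η ξ : List Bool} (h : ξ <+: η ++ ξ) :
    ∀ k, ξ.length ≤ k * η.length → ξ <+: wpow η k := by
  intro k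
  induction k generalizing ξ with
  | zero => simp_all
  | succ k ih =>
    intro hk
    rw [wpow_succ]
    by_cases hle : ξ.length ≤ η.length
    · rw [List.prefix_iff_eq_take.1 h, List.take_append_of_le_length hle]
      exact (List.take_prefix _ _).trans (List.prefix_append _ _)
    · obtain ⟨ζ, hζ⟩ : η <+: ξ := List.prefix_of_prefix_length_le (List.prefix_append η ξ) h
        (by omega)
      subst hζ
      have hζ : ζ <+: η ++ ζ := by simpa using h
      exact List.prefix_append_right_inj η |>.2 (ih hζ (by simp at hk ⊢; nlinarith))

theorem wpow_take_prefix {v ξ : List Bool} {e : ℕ} (he : 1 ≤ e) (heξ : e ≤ ξ.length)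
    (h₁ : ξ <+: v) (h₂ : ξ <+: v.drop e) : wpow (v.take e) (ξ.length / e + 1) <+: v := by
  have hev : e ≤ v.length := by
    have := h₂.length_le
    rw [List.length_drop] at this
    omega
  set η := v.take e
  have hηlen : η.length = e := by simp [η, hev]
  have hηξ : η ++ ξ <+: v := by
    rw [← List.take_append_drop e v]
    exact (List.prefix_append_right_inj _).2 h₂
  have hξ : ξ <+: η ++ ξ := List.prefix_of_prefix_length_le h₁ hηξ (by simp)
  have hperiod : ξ <+: wpow η (ξ.length / e + 1) := prefix_wpow_of_prefix_append hξ _ <| by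
    rw [hηlen, add_mul, one_mul]
    exact (Nat.lt_div_mul_add he).le
  have hq : wpow η (ξ.length / e) <+: ξ :=
    List.prefix_of_prefix_length_le (wpow_prefix_wpow η (by omega)) hperiod
      (by rw [wpow_length, hηlen]; exact Nat.div_mul_le_self _ _)
  rw [wpow_succ]
  exact ((List.prefix_append_right_inj η).2 hq).trans hηξ

theorem length_cube_le_mul_Lam {w ξ : List Bool} {i e : ℕ} (he : 1 ≤ e) (heξ : e ≤ ξ.length)
    (h₁ : ξ <+: w.drop i) (h₂ : ξ <+: (w.drop i).drop e) : ξ.length ^ 3 ≤ e * Lam w := by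
  have hpow := wpow_take_prefix he heξ h₁ h₂
  have hηlen : ((w.drop i).take e).length = e := by
    have := h₂.length_le
    simp only [List.length_drop] at this
    simp only [List.length_take, List.length_drop]
    omega
  have hmem : e ^ 2 * (ξ.length / e + 1 + 1) ^ 3 ∈ LamSet w :=
    ⟨(w.drop i).take e, ξ.length / e + 1, List.ne_nil_of_length_pos (hηlen.symm ▸ he),
      Nat.le_add_left 1 _,
      hpow.isInfix.trans (List.drop_suffix i w).isInfix, by rw [hηlen]⟩
  calc ξ.length ^ 3 ≤ (e * (ξ.length / e + 2)) ^ 3 := by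
        gcongr
        have := Nat.lt_div_mul_add (a := ξ.length) he
        rw [mul_add, mul_comm]
        omega
    _ = e * (e ^ 2 * (ξ.length / e + 1 + 1) ^ 3) := by ring
    _ ≤ e * Lam w := Nat.mul_le_mul_left _ (le_Lam hmem)

theorem exists_le_apply_and_sum_Icc_sub_le (f : ℕ → ℝ) (n : ℕ) {B t : ℝ} (ht : 0 ≤ t)
    (hB : ∀ m, f m ≤ B) (h : n * t < ∑ m ∈ Icc 1 n, f m) :
    ∃ m, t ≤ f m ∧ ∑ m ∈ Icc 1 n, f m - n * t ≤ m * B := by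
  set S := (Icc 1 n).filter (t ≤ f ·)
  have hout : ∑ m ∈ Icc 1 n with ¬t ≤ f m, f m ≤ n * t := by
    refine (sum_le_card_nsmul _ _ t fun m hm => (not_le.1 (mem_filter.1 hm).2).le).trans ?_
    rw [nsmul_eq_mul]
    gcongr
    exact_mod_cast (card_filter_le _ _).trans (Nat.card_Icc 1 n).le
  have hsplit : ∑ m ∈ S, f m + ∑ m ∈ Icc 1 n with ¬t ≤ f m, f m = ∑ m ∈ Icc 1 n, f m :=
    sum_filter_add_sum_filter_not _ _ _
  have hne : S.Nonempty := by
    by_contra hS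
    rw [not_nonempty_iff_eq_empty.1 hS, sum_empty] at hsplit
    linarith
  set m := S.max' hne
  have hm : t ≤ f m := (mem_filter.1 (S.max'_mem hne)).2
  have hcard : (#S : ℝ) ≤ m := by
    have hsub : S ⊆ Icc 1 m := fun k hk =>
      mem_Icc.2 ⟨(mem_Icc.1 (mem_filter.1 hk).1).1, S.le_max' k hk⟩
    exact_mod_cast (card_le_card hsub).trans (Nat.card_Icc 1 m).le
  have hin : ∑ m ∈ S, f m ≤ #S * B := by
    simpa using sum_le_card_nsmul S f B fun m _ => hB m
  refine ⟨m, hm, ?_⟩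
  have : (#S : ℝ) * B ≤ m * B := mul_le_mul_of_nonneg_right hcard (ht.trans (hm.trans (hB m)))
  linarith

theorem exists_long_frequent_factor {w : List Bool} {c : ℝ} (hc : 0 < c) (hn : 0 < w.length)
    (h : c * w.length ^ 3 ≤ kxSum w) :
    ∃ ξ : List Bool, c / 2 * w.length ≤ ξ.length ∧ c / 2 * w.length ≤ occ w ξ := by
  set n := w.length
  have hn : (0 : ℝ) < n := Nat.cast_pos.2 hn
  have hsum : (kxSum w : ℝ) = ∑ m ∈ Icc 1 w.length, (kxSumOfLength w m : ℝ) := by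
    rw [kxSum_eq_sum_kxSumOfLength, Nat.cast_sum]
  obtain ⟨m, hm, hmB⟩ := exists_le_apply_and_sum_Icc_sub_le (fun m => (kxSumOfLength w m : ℝ))
    w.length (B := (n : ℝ) ^ 2) (t := c / 2 * (n : ℝ) ^ 2) (by positivity)
    (fun m => by exact_mod_cast kxSumOfLength_le w m) (by rw [← hsum]; nlinarith [pow_pos hn 3])
  obtain ⟨ξ, hξ, hocc⟩ := exists_length_eq_kxSumOfLength_le w m
  have hocc : (kxSumOfLength w m : ℝ) ≤ occ w ξ * (n : ℝ) := by exact_mod_cast hocc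
  refine ⟨ξ, ?_, ?_⟩
  · rw [hξ]
    rw [← hsum] at hmB
    nlinarith [pow_pos hn 2]
  · nlinarith

theorem le_Lam_div_cube_of_le_kxSum_div_cube {w : List Bool} {c : ℝ} (hc : 0 < c)
    (hn : 8 ≤ c ^ 2 * w.length) (h : c ≤ kxSum w / (w.length : ℝ) ^ 3) :
    c ^ 4 / 32 ≤ Lam w / (w.length : ℝ) ^ 3 := by
  set n := w.length
  have hn0 : 0 < w.length := Nat.pos_of_ne_zero fun h0 => by simp [n, h0] at hn; linarith
  have hn : (0 : ℝ) < n := Nat.cast_pos.2 hn0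
  rw [le_div_iff₀ (by positivity)] at h ⊢
  have hc1 : c ≤ 1 := by
    have : (kxSum w : ℝ) ≤ (n : ℝ) ^ 3 := by exact_mod_cast kxSum_le w
    nlinarith [pow_pos hn 3]
  have hcn : 8 ≤ c * (n : ℝ) := by nlinarith
  obtain ⟨ξ, hlen, hocc⟩ := exists_long_frequent_factor hc hn0 h
  have h2 : 2 ≤ occ w ξ := by
    have : (2 : ℝ) ≤ occ w ξ := by linarith
    exact_mod_cast this
  obtain ⟨i, e, he, hek, h₁, h₂⟩ := exists_close_occurrences h2
  have hek : (e : ℝ) * (occ w ξ - 1) ≤ (n : ℝ) := by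
    rw [← Nat.cast_one, ← Nat.cast_sub (by omega)]
    exact_mod_cast hek
  -- `occ w ξ - 1 ≥ c n / 2 - 1 ≥ c n / 4`
  have hce : c * e ≤ 4 := by nlinarith
  have heξ : e ≤ ξ.length := by
    have : (e : ℝ) ≤ ξ.length := by nlinarith
    exact_mod_cast this
  have hcube : (ξ.length : ℝ) ^ 3 ≤ e * Lam w := by
    exact_mod_cast length_cube_le_mul_Lam he heξ h₁ h₂
  calc c ^ 4 / 32 * (n : ℝ) ^ 3 = c / 4 * (c / 2 * (n : ℝ)) ^ 3 := by ring
    _ ≤ c / 4 * (ξ.length : ℝ) ^ 3 := by gcongr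
    _ ≤ c / 4 * (e * Lam w) := by gcongr
    _ ≤ Lam w := by nlinarith [(Nat.cast_nonneg (Lam w) : (0 : ℝ) ≤ Lam w)]

theorem Lam_div_cube_le (w : List Bool) : (Lam w : ℝ) / (w.length : ℝ) ^ 3 ≤ 8 :=
  div_le_of_le_mul₀ (by positivity) (by norm_num) (by exact_mod_cast Lam_le w)

theorem kxSum_div_cube_le (w : List Bool) : (kxSum w : ℝ) / (w.length : ℝ) ^ 3 ≤ 1 :=
  div_le_of_le_mul₀ (by positivity) zero_le_one (by rw [one_mul]; exact_mod_cast kxSum_le w)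

theorem Lam_div_cube_pow_le (w : List Bool) :
    ((Lam w : ℝ) / (w.length : ℝ) ^ 3) ^ 3 ≤ 4096 * (kxSum w / (w.length : ℝ) ^ 3) := by
  rcases Nat.eq_zero_or_pos w.length with h0 | hn
  · simp [h0]
  have hn : (0 : ℝ) < w.length := Nat.cast_pos.2 hn
  have h : (Lam w : ℝ) ^ 3 ≤ 4096 * (w.length : ℝ) ^ 6 * kxSum w := by exact_mod_cast Lam_cube_le w
  rw [div_pow, div_le_iff₀ (by positivity), mul_div_assoc', div_mul_eq_mul_div,
    le_div_iff₀ (by positivity)]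
  calc (Lam w : ℝ) ^ 3 * (w.length : ℝ) ^ 3
      ≤ 4096 * (w.length : ℝ) ^ 6 * kxSum w * (w.length : ℝ) ^ 3 := by gcongr
    _ = _ := by ring

theorem Filter.liminf_pos_of_liminf_pos {ι : Type*} {l : Filter ι} {f g : ι → ℝ}
    (hf : IsBoundedUnder (· ≥ ·) l f) (hg : IsCoboundedUnder (· ≥ ·) l g)
    (h : ∀ c > 0, ∃ c' > 0, ∀ᶠ i in l, c ≤ f i → c' ≤ g i) (hpos : 0 < liminf f l) :
    0 < liminf g l := by
  obtain ⟨c', hc', hfg⟩ := h (liminf f l / 2) (by positivity)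
  have hf : ∀ᶠ i in l, liminf f l / 2 < f i := eventually_lt_of_lt_liminf (by linarith) hf
  exact hc'.trans_le <| le_liminf_of_le hg <| (hf.and hfg).mono fun i hi => hi.2 hi.1.le

/-- `liminf Λ(x_1...x_n)/n³ > 0` implies `liminf Σ(x_1...x_n)/n³ > 0`,
and conversely. -/
theorem liminf_lam_pos_iff_liminf_kxSum_pos (x : ℕ → Bool) :
    (0 < atTop.liminf (fun n => (Lam (pref x n) : ℝ) / (n : ℝ) ^ 3) →
      0 < atTop.liminf (fun n => (kxSum (pref x n) : ℝ) / (n : ℝ) ^ 3)) ∧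
    (0 < atTop.liminf (fun n => (kxSum (pref x n) : ℝ) / (n : ℝ) ^ 3) →
      0 < atTop.liminf (fun n => (Lam (pref x n) : ℝ) / (n : ℝ) ^ 3)) := by
  have hLam n := pref_length x n ▸ Lam_div_cube_le (pref x n)
  have hkx n := pref_length x n ▸ kxSum_div_cube_le (pref x n)
  refine ⟨liminf_pos_of_liminf_pos (isBoundedUnder_of ⟨0, fun n => by positivity⟩)
    (isBoundedUnder_of ⟨1, hkx⟩).isCoboundedUnder_flip fun c hc => ?_,
    liminf_pos_of_liminf_pos (isBoundedUnder_of ⟨0, fun n => by positivity⟩)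
    (isBoundedUnder_of ⟨8, hLam⟩).isCoboundedUnder_flip fun c hc => ?_⟩
  · refine ⟨c ^ 3 / 4096, by positivity, .of_forall fun n hcn => ?_⟩
    have hpow := pref_length x n ▸ Lam_div_cube_pow_le (pref x n)
    have : c ^ 3 ≤ ((Lam (pref x n) : ℝ) / (n : ℝ) ^ 3) ^ 3 := by gcongr
    linarith
  · refine ⟨c ^ 4 / 32, by positivity, ?_⟩
    filter_upwards [tendsto_natCast_atTop_atTop.eventually_ge_atTop (8 / c ^ 2)] with n hn hcn
    have := le_Lam_div_cube_of_le_kxSum_div_cube (w := pref x n) hc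
    rw [pref_length] at this
    exact this ((div_le_iff₀' (by positivity)).1 hn) hcn
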